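/- arXiv:2004.00343 — 2 statements merged into one kernel-verified Lean document; each statement's English description precedes it below -/
import Mathlib

section
/- Consider the calcium equation dCa_i/dt = (−α·g_Ca·m_∞(v)·(v − v_Ca) − k_Ca·Ca_i)·ρ(Ca_i) of the full pacemaker model with α, g_Ca, k_Ca, K_d, B_T, v_2 > 0, m_∞(v) = (1/2)(1 + tanh((v − v_1)/v_2)), and ρ(Ca_i) = (K_d + Ca_i)²/((K_d + Ca_i)² + K_d·B_T), and suppose v_K < v_Ca. If v ∈ [v_K, v_Ca] and Ca_i > α·g_Ca·(v_Ca − v_K)/k_Ca, then dCa_i/dt < 0. In particular the cytosolic calcium concentration cannot grow beyond the bound M = α·g_Ca·(v_Ca − v_K)/k_Ca while the membrane potential remains in [v_K, v_Ca]. -/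
set_option autoImplicit false

/-- For the calcium equation `dCaᵢ/dt = (−α·g_Ca·m∞(v)·(v − v_Ca) − k_Ca·Caᵢ)·ρ(Caᵢ)` with
`α, g_Ca, k_Ca, K_d, B_T, v₂ > 0` and `v_K < v_Ca`: if `v ∈ [v_K, v_Ca]` and
`Caᵢ > α·g_Ca·(v_Ca − v_K)/k_Ca`, then `dCaᵢ/dt < 0`. In particular the cytosolic calcium
concentration cannot grow beyond the bound `M = α·g_Ca·(v_Ca − v_K)/k_Ca` while the
membrane potential remains in `[v_K, v_Ca]`. -/
theorem calcium_bounded (α g_Ca k_Ca K_d B_T v₁ v₂ v_K v_Ca : ℝ)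
    (hα : 0 < α) (hgCa : 0 < g_Ca) (hkCa : 0 < k_Ca) (hKd : 0 < K_d) (hBT : 0 < B_T)
    (hv₂ : 0 < v₂) (hKCa : v_K < v_Ca) (v Caᵢ : ℝ) (hv : v ∈ Set.Icc v_K v_Ca)
    (hCa : α * g_Ca * (v_Ca - v_K) / k_Ca < Caᵢ) :
    (-(α * g_Ca * ((1 / 2) * (1 + Real.tanh ((v - v₁) / v₂))) * (v - v_Ca)) -
          k_Ca * Caᵢ) *
        ((K_d + Caᵢ) ^ 2 / ((K_d + Caᵢ) ^ 2 + K_d * B_T)) < 0 := by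
  obtain ⟨hv1, hv2⟩ := hv
  set m : ℝ := (1 / 2) * (1 + Real.tanh ((v - v₁) / v₂)) with hm
  have htanh : ∀ x : ℝ, -1 < Real.tanh x ∧ Real.tanh x < 1 := by
    intro x
    have hc : 0 < Real.cosh x := Real.cosh_pos x
    have h1 : 0 < Real.cosh x - Real.sinh x := by
      rw [Real.cosh_eq, Real.sinh_eq]; have := Real.exp_pos (-x); ring_nf; positivity
    have h2 : 0 < Real.cosh x + Real.sinh x := by
      rw [Real.cosh_eq, Real.sinh_eq]; have := Real.exp_pos x; ring_nf; positivity
    rw [Real.tanh_eq_sinh_div_cosh]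
    constructor
    · rw [lt_div_iff₀ hc]; linarith
    · rw [div_lt_iff₀ hc]; linarith
  obtain ⟨ht1, ht2⟩ := htanh ((v - v₁) / v₂)
  have hm0 : 0 ≤ m := by nlinarith
  have hm1 : m ≤ 1 := by nlinarith
  have hM0 : 0 ≤ α * g_Ca * (v_Ca - v_K) / k_Ca := by
    apply div_nonneg _ hkCa.le
    nlinarith [mul_pos (mul_pos hα hgCa) (sub_pos.mpr hKCa)]
  have hCapos : 0 < Caᵢ := lt_of_le_of_lt hM0 hCa
  have hkCa' : α * g_Ca * (v_Ca - v_K) < k_Ca * Caᵢ := by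
    rw [div_lt_iff₀ hkCa] at hCa; linarith [hCa]
  have hfirst : -(α * g_Ca * m * (v - v_Ca)) - k_Ca * Caᵢ < 0 := by
    have hag : 0 < α * g_Ca := by positivity
    have hmv : m * (v_Ca - v) ≤ 1 * (v_Ca - v_K) :=
      mul_le_mul hm1 (by linarith) (by linarith) zero_le_one
    nlinarith [mul_le_mul_of_nonneg_left hmv hag.le]
  have hrho : 0 < (K_d + Caᵢ) ^ 2 / ((K_d + Caᵢ) ^ 2 + K_d * B_T) := by positivity
  exact mul_neg_of_neg_of_pos hfirst hrho
end

section
/- Consider the full pacemaker model C·dv/dt = −g_L(v − v_L) − g_K·n·(v − v_K) − g_Ca·m_∞(v)·(v − v_Ca), dn/dt = λ_n(v)(n_∞(v, Ca_i) − n), dCa_i/dt = (−α·g_Ca·m_∞(v)·(v − v_Ca) − k_Ca·Ca_i)·ρ(Ca_i), where m_∞(v) = (1/2)(1 + tanh((v − v_1)/v_2)), n_∞(v, Ca_i) = (1/2)(1 + tanh((v − v_3(Ca_i))/v_4)), v_3(Ca_i) = −(v_5/2)·tanh((Ca_i − Ca_3)/Ca_4) + v_6, λ_n(v, Ca_i)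 = φ_n·cosh((v − v_3(Ca_i))/(2 v_4)), ρ(Ca_i) = (K_d + Ca_i)²/((K_d + Ca_i)² + K_d·B_T), with C, g_L, g_K, g_Ca, v_2, v_4, v_5, Ca_4, φ_n, α, k_Ca, K_d, B_T all positive, v_1, v_6, Ca_3 real, and v_K < v_L < v_Ca. Let M = α·g_Ca·(v_Ca − v_K)/k_Ca. Then on the boundary of the box B = [v_K, v_Ca] × [0, 1] × [0, M] the vector field never points strictly outward: at v = v_K the v-component is positive and at v = v_Ca it is negative (for n ∈ [0,1]); at n = 0 the n-component is positive and at n = 1 it is negative; at Ca_i = 0 the Ca_i-component is nonnegative (strictly positive if v < v_Ca), and at Ca_i = M it is nonpositive (strictly negative if v > v_K). -/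
set_option autoImplicit false

lemma my_tanh_lt_one (x : ℝ) : Real.tanh x < 1 := by
  rw [Real.tanh_eq_sinh_div_cosh, div_lt_one (Real.cosh_pos x)]
  nlinarith [Real.cosh_sub_sinh x, Real.exp_pos (-x)]

lemma my_neg_one_lt_tanh (x : ℝ) : -1 < Real.tanh x := by
  rw [Real.tanh_eq_sinh_div_cosh, lt_div_iff₀ (Real.cosh_pos x)]
  nlinarith [Real.cosh_add_sinh x, Real.exp_pos x]

lemma half_one_add_tanh_pos (x : ℝ) : 0 < (1 / 2 : ℝ) * (1 + Real.tanh x) := by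
  nlinarith [my_neg_one_lt_tanh x]

lemma half_one_add_tanh_lt_one (x : ℝ) : (1 / 2 : ℝ) * (1 + Real.tanh x) < 1 := by
  nlinarith [my_tanh_lt_one x]

/-- On the boundary of the box `B = [v_K, v_Ca] × [0, 1] × [0, M]`, with
`M = α·g_Ca·(v_Ca − v_K)/k_Ca`, the vector field of the full pacemaker model never points
strictly outward: at `v = v_K` the `v`-component is positive and at `v = v_Ca` it is
negative (for `n ∈ [0,1]`); at `n = 0` the `n`-component is positive and at `n = 1` it is
negative; at `Caᵢ = 0` the `Caᵢ`-component is nonnegative (strictly positive if `v < v_Ca`),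
and at `Caᵢ = M` it is nonpositive (strictly negative if `v > v_K`). -/
theorem full_model_box_inward
    (C g_L g_K g_Ca v₁ v₂ v₄ v₅ v₆ Ca₃ Ca₄ φₙ α k_Ca K_d B_T v_L v_K v_Ca : ℝ)
    (hC : 0 < C) (hgL : 0 < g_L) (hgK : 0 < g_K) (hgCa : 0 < g_Ca)
    (hv₂ : 0 < v₂) (hv₄ : 0 < v₄) (hv₅ : 0 < v₅) (hCa₄ : 0 < Ca₄) (hφ : 0 < φₙ)
    (hα : 0 < α) (hkCa : 0 < k_Ca) (hKd : 0 < K_d) (hBT : 0 < B_T)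
    (hKL : v_K < v_L) (hLCa : v_L < v_Ca) :
    let mInf : ℝ → ℝ := fun v => (1 / 2) * (1 + Real.tanh ((v - v₁) / v₂))
    let v₃ : ℝ → ℝ := fun Caᵢ => -(v₅ / 2) * Real.tanh ((Caᵢ - Ca₃) / Ca₄) + v₆
    let nInf : ℝ → ℝ → ℝ := fun v Caᵢ => (1 / 2) * (1 + Real.tanh ((v - v₃ Caᵢ) / v₄))
    let lam : ℝ → ℝ → ℝ := fun v Caᵢ => φₙ * Real.cosh ((v - v₃ Caᵢ) / (2 * v₄))
    let ρ : ℝ → ℝ := fun Caᵢ => (K_d + Caᵢ) ^ 2 / ((K_d + Caᵢ) ^ 2 + K_d * B_T)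
    let Fv : ℝ → ℝ → ℝ := fun v n =>
      (-g_L * (v - v_L) - g_K * n * (v - v_K) - g_Ca * mInf v * (v - v_Ca)) / C
    let Fn : ℝ → ℝ → ℝ → ℝ := fun v n Caᵢ => lam v Caᵢ * (nInf v Caᵢ - n)
    let FCa : ℝ → ℝ → ℝ := fun v Caᵢ =>
      (-(α * g_Ca * mInf v * (v - v_Ca)) - k_Ca * Caᵢ) * ρ Caᵢ
    let M : ℝ := α * g_Ca * (v_Ca - v_K) / k_Ca
    (∀ n ∈ Set.Icc (0 : ℝ) 1, 0 < Fv v_K n) ∧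
    (∀ n ∈ Set.Icc (0 : ℝ) 1, Fv v_Ca n < 0) ∧
    (∀ v ∈ Set.Icc v_K v_Ca, ∀ Caᵢ ∈ Set.Icc 0 M, 0 < Fn v 0 Caᵢ) ∧
    (∀ v ∈ Set.Icc v_K v_Ca, ∀ Caᵢ ∈ Set.Icc 0 M, Fn v 1 Caᵢ < 0) ∧
    (∀ v ∈ Set.Icc v_K v_Ca, 0 ≤ FCa v 0 ∧ (v < v_Ca → 0 < FCa v 0)) ∧
    (∀ v ∈ Set.Icc v_K v_Ca, FCa v M ≤ 0 ∧ (v_K < v → FCa v M < 0)) := by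
  intro mInf v₃ nInf lam ρ Fv Fn FCa M
  have hKCa : v_K < v_Ca := hKL.trans hLCa
  have hm : ∀ v, 0 < mInf v ∧ mInf v < 1 := fun v =>
    ⟨half_one_add_tanh_pos _, half_one_add_tanh_lt_one _⟩
  have hn : ∀ v c, 0 < nInf v c ∧ nInf v c < 1 := fun v c =>
    ⟨half_one_add_tanh_pos _, half_one_add_tanh_lt_one _⟩
  have hlam : ∀ v c, 0 < lam v c := fun v c => mul_pos hφ (Real.cosh_pos _)
  have hρ : ∀ c, 0 ≤ c → 0 < ρ c := fun c hc => by
    have h1 : 0 < (K_d + c) ^ 2 := by positivity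
    exact div_pos h1 (by positivity)
  have hMk : k_Ca * M = α * g_Ca * (v_Ca - v_K) := by
    show k_Ca * (α * g_Ca * (v_Ca - v_K) / k_Ca) = _
    field_simp
  refine ⟨?_, ?_, ?_, ?_, ?_, ?_⟩
  · intro n ⟨hn0, hn1⟩
    have h := hm v_K
    apply div_pos _ hC
    nlinarith [mul_pos (mul_pos hgCa h.1) (show (0:ℝ) < v_Ca - v_K by linarith),
      mul_pos hgL (show (0:ℝ) < v_L - v_K by linarith)]
  · intro n ⟨hn0, hn1⟩
    apply div_neg_of_neg_of_pos _ hC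
    nlinarith [mul_nonneg (mul_nonneg hgK.le hn0) (show (0:ℝ) ≤ v_Ca - v_K by linarith),
      mul_pos hgL (show (0:ℝ) < v_Ca - v_L by linarith)]
  · intro v _ c _
    have := (hn v c).1
    show 0 < lam v c * (nInf v c - 0)
    have := hlam v c
    nlinarith
  · intro v _ c _
    have := (hn v c).2
    have h := hlam v c
    show lam v c * (nInf v c - 1) < 0
    nlinarith
  · intro v ⟨hv1, hv2⟩
    have hρ0 := hρ 0 le_rfl
    have hmv := hm v
    have key : ∀ hvc : v ≤ v_Ca, 0 ≤ -(α * g_Ca * mInf v * (v - v_Ca)) - k_Ca * 0 := by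
      intro hvc
      nlinarith [mul_nonneg (mul_nonneg (mul_nonneg hα.le hgCa.le) hmv.1.le)
        (show (0:ℝ) ≤ v_Ca - v by linarith)]
    constructor
    · exact mul_nonneg (key hv2) hρ0.le
    · intro hlt
      apply mul_pos _ hρ0
      nlinarith [mul_pos (mul_pos (mul_pos hα hgCa) hmv.1)
        (show (0:ℝ) < v_Ca - v by linarith)]
  · intro v ⟨hv1, hv2⟩
    have hM0 : 0 ≤ M := by
      apply div_nonneg _ hkCa.le
      nlinarith [mul_pos (mul_pos hα hgCa) (show (0:ℝ) < v_Ca - v_K by linarith)]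
    have hρM := hρ M hM0
    have hmv := hm v
    have key : -(α * g_Ca * mInf v * (v - v_Ca)) - k_Ca * M < 0 := by
      have h1 : mInf v * (v_Ca - v) < v_Ca - v_K := by
        rcases eq_or_lt_of_le hv2 with h | h
        · rw [← h]; simp; linarith
        · nlinarith [mul_pos (sub_pos.2 hmv.2) (sub_pos.2 h), hmv.1]
      have h3 : α * g_Ca * (mInf v * (v_Ca - v)) < α * g_Ca * (v_Ca - v_K) :=
        mul_lt_mul_of_pos_left h1 (mul_pos hα hgCa)
      rw [hMk]
      nlinarith [h3]
    exact ⟨(mul_neg_of_neg_of_pos key hρM).le,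
      fun _ => mul_neg_of_neg_of_pos key hρM⟩
end
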